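/- arXiv:1704.00145 — 8 statements merged into one kernel-verified Lean document; each statement's English description precedes it below -/
import Mathlib

section
/- Suppose x* ∈ {0,1}^n satisfies Σ c_i x*_i = b and min_{i : x*_i = 1} p_i/c_i ≥ max_{i : x*_i = 0} p_i/c_i. Then for every feasible x (i.e., 0 ≤ x_i ≤ 1 and Σ c_i x_i ≤ b), Σ p_i x_i ≤ Σ p_i x*_i. -/
/-- Sufficiency of the optimality criterion: a 0-1 vector with binding budget and
ratios on the chosen items dominating ratios on the rejected items is optimal. -/
theorem fkp_criterion_sufficient {n : ℕ} (p c : Fin n → ℝ) (b : ℝ)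
    (hp : ∀ i, 0 < p i) (hc : ∀ i, 0 < c i) (hb : 0 < b)
    (xstar : Fin n → ℝ) (hx : ∀ i, xstar i = 0 ∨ xstar i = 1)
    (hbind : ∑ i, c i * xstar i = b)
    (hratio : ∀ i j, xstar i = 1 → xstar j = 0 → p j / c j ≤ p i / c i) :
    ∀ x : Fin n → ℝ, (∀ i, 0 ≤ x i ∧ x i ≤ 1) → ∑ i, c i * x i ≤ b →
      ∑ i, p i * x i ≤ ∑ i, p i * xstar i := by
  intro x hxf hxb
  -- the chosen set is nonempty
  set S : Finset (Fin n) := Finset.univ.filter (fun i => xstar i = 1) with hS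
  have hSne : S.Nonempty := by
    by_contra h
    rw [Finset.not_nonempty_iff_eq_empty] at h
    have : ∑ i, c i * xstar i = 0 := by
      apply Finset.sum_eq_zero
      intro i _
      have hi : xstar i = 0 := by
        rcases hx i with h0 | h1
        · exact h0
        · exfalso
          have : i ∈ S := by simp [hS, h1]
          simp [h] at this
      simp [hi]
    linarith [hbind]
  set lam : ℝ := S.inf' hSne (fun i => p i / c i) with hlam
  obtain ⟨i0, hi0S, hi0⟩ := S.exists_mem_eq_inf' hSne (fun i => p i / c i)
  have hi0one : xstar i0 = 1 := by simpa [hS] using hi0S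
  have hlam_pos : 0 < lam := by
    rw [hlam, hi0]
    exact div_pos (hp i0) (hc i0)
  have hlam_le : ∀ i, xstar i = 1 → lam ≤ p i / c i := by
    intro i hi
    exact Finset.inf'_le _ (by simp [hS, hi])
  have hlam_ge : ∀ j, xstar j = 0 → p j / c j ≤ lam := by
    intro j hj
    rw [hlam, hi0]
    exact hratio i0 j hi0one hj
  have key : ∀ i, p i * x i - p i * xstar i ≤ lam * (c i * x i - c i * xstar i) := by
    intro i
    rcases hx i with h0 | h1
    · have h1 : p i ≤ lam * c i := by
        have := hlam_ge i h0
        rw [div_le_iff₀ (hc i)] at this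
        linarith
      have := (hxf i).1
      rw [h0]
      nlinarith
    · have h2 : lam * c i ≤ p i := by
        have := hlam_le i h1
        rw [le_div_iff₀ (hc i)] at this
        linarith
      have := (hxf i).2
      rw [h1]
      nlinarith
  have hsum : ∑ i, (p i * x i - p i * xstar i) ≤
      ∑ i, lam * (c i * x i - c i * xstar i) :=
    Finset.sum_le_sum (fun i _ => key i)
  rw [Finset.sum_sub_distrib] at hsum
  have hrhs : ∑ i, lam * (c i * x i - c i * xstar i) =
      lam * (∑ i, c i * x i - ∑ i, c i * xstar i) := by
    rw [← Finset.mul_sum, Finset.sum_sub_distrib]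
  rw [hrhs, hbind] at hsum
  nlinarith [hsum, hxb, hlam_pos]
end

section
/- Suppose x* ∈ {0,1}^n is a feasible solution of the fractional knapsack problem and there exist indices i, j with x*_i = 1, x*_j = 0, and p_i/c_i < p_j/c_j. Then x* is not optimal. -/
def FKP.Feasible {n : ℕ} (c : Fin n → ℝ) (b : ℝ) (x : Fin n → ℝ) : Prop :=
  (∀ i, 0 ≤ x i ∧ x i ≤ 1) ∧ ∑ i, c i * x i ≤ b

def FKP.Optimal {n : ℕ} (p c : Fin n → ℝ) (b : ℝ) (x : Fin n → ℝ) : Prop :=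
  FKP.Feasible c b x ∧ ∀ y, FKP.Feasible c b y → ∑ i, p i * y i ≤ ∑ i, p i * x i

/-!
Moving an amount `δ > 0` of budget from a chosen item `i` to a rejected item `j`, i.e. lowering
`x i` by `δ / c i` and raising `x j` by `δ / c j`, leaves the total cost unchanged and changes the
profit by `δ * (p j / c j - p i / c i) > 0`. With `x i = 1` and `x j = 0`, the step
`δ = min (c i) (c j)` keeps every coordinate in `[0, 1]`.
-/

theorem Finset.sum_mul_add_single_sub_single {ι : Type*} [Fintype ι] [DecidableEq ι]
    (f x : ι → ℝ) (i j : ι) (a b : ℝ) :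
    ∑ k, f k * (x + Pi.single j b - Pi.single i a : ι → ℝ) k =
      ∑ k, f k * x k + (f j * b - f i * a) := by
  simp only [Pi.add_apply, Pi.sub_apply, mul_sub, mul_add, Finset.sum_sub_distrib,
    Finset.sum_add_distrib, Pi.single_apply, mul_ite, mul_zero, Finset.sum_ite_eq',
    Finset.mem_univ, if_true]
  ring

namespace FKP

variable {n : ℕ}

noncomputable def exchange (c x : Fin n → ℝ) (i j : Fin n) (δ : ℝ) : Fin n → ℝ :=
  x + Pi.single j (δ / c j) - Pi.single i (δ / c i)

theorem cost_exchange {c : Fin n → ℝ} (x : Fin n → ℝ) {i j : Fin n} (δ : ℝ)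
    (hci : c i ≠ 0) (hcj : c j ≠ 0) :
    ∑ k, c k * exchange c x i j δ k = ∑ k, c k * x k := by
  rw [exchange, Finset.sum_mul_add_single_sub_single, mul_div_cancel₀ _ hcj,
    mul_div_cancel₀ _ hci, sub_self, add_zero]

theorem profit_exchange (p c x : Fin n → ℝ) (i j : Fin n) (δ : ℝ) :
    ∑ k, p k * exchange c x i j δ k = ∑ k, p k * x k + δ * (p j / c j - p i / c i) := by
  rw [exchange, Finset.sum_mul_add_single_sub_single]
  ring

theorem exchange_apply_mem_Icc {c x : Fin n → ℝ} {i j : Fin n} {δ : ℝ}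
    (hx : ∀ k, x k ∈ Set.Icc 0 1) (hci : 0 < c i) (hcj : 0 < c j) (hδ : 0 ≤ δ)
    (hi : δ / c i ≤ x i) (hj : x j + δ / c j ≤ 1) (k : Fin n) :
    exchange c x i j δ k ∈ Set.Icc 0 1 := by
  have hdi : 0 ≤ δ / c i := div_nonneg hδ hci.le
  have hdj : 0 ≤ δ / c j := div_nonneg hδ hcj.le
  simp only [exchange, Set.mem_Icc, Pi.add_apply, Pi.sub_apply, Pi.single_apply]
  obtain ⟨hk0, hk1⟩ := hx k
  split_ifs with hkj hki hki <;> subst_vars <;> constructor <;> linarith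

theorem feasible_exchange {c x : Fin n → ℝ} {b : ℝ} {i j : Fin n} {δ : ℝ}
    (hx : Feasible c b x) (hci : 0 < c i) (hcj : 0 < c j) (hδ : 0 ≤ δ)
    (hi : δ / c i ≤ x i) (hj : x j + δ / c j ≤ 1) :
    Feasible c b (exchange c x i j δ) :=
  ⟨exchange_apply_mem_Icc hx.1 hci hcj hδ hi hj,
    (cost_exchange x δ hci.ne' hcj.ne').le.trans hx.2⟩

theorem not_optimal_of_ratio_lt {p c x : Fin n → ℝ} {b : ℝ} {i j : Fin n} {δ : ℝ}
    (hx : Feasible c b x) (hci : 0 < c i) (hcj : 0 < c j) (hδ : 0 < δ)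
    (hi : δ / c i ≤ x i) (hj : x j + δ / c j ≤ 1) (hratio : p i / c i < p j / c j) :
    ¬ Optimal p c b x := fun hopt => by
  have hle := hopt.2 _ (feasible_exchange hx hci hcj hδ.le hi hj)
  rw [profit_exchange] at hle
  have hgain : 0 < δ * (p j / c j - p i / c i) := mul_pos hδ (sub_pos.2 hratio)
  linarith

end FKP

theorem fkp_ratio_violation_not_optimal_general {n : ℕ} (p c : Fin n → ℝ) (b : ℝ)
    (hc : ∀ k, 0 < c k)
    (xstar : Fin n → ℝ)
    (hfeas : FKP.Feasible c b xstar)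
    (hij : ∃ i j, xstar i = 1 ∧ xstar j = 0 ∧ p i / c i < p j / c j) :
    ¬ FKP.Optimal p c b xstar := by
  obtain ⟨i, j, hi, hj, hratio⟩ := hij
  refine FKP.not_optimal_of_ratio_lt (δ := min (c i) (c j)) hfeas (hc i) (hc j)
    (lt_min (hc i) (hc j)) ?_ ?_ hratio
  · rw [hi, div_le_one (hc i)]
    exact min_le_left _ _
  · rw [hj, zero_add, div_le_one (hc j)]
    exact min_le_right _ _

/-- Necessity of the ratio condition: if a chosen item has a strictly smaller
profit/cost ratio than a rejected item, the 0-1 solution is not optimal. -/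
theorem fkp_ratio_violation_not_optimal {n : ℕ} (p c : Fin n → ℝ) (b : ℝ)
    (hp : ∀ k, 0 < p k) (hc : ∀ k, 0 < c k) (hb : 0 < b)
    (xstar : Fin n → ℝ) (hx : ∀ k, xstar k = 0 ∨ xstar k = 1)
    (hfeas : FKP.Feasible c b xstar)
    (hij : ∃ i j, xstar i = 1 ∧ xstar j = 0 ∧ p i / c i < p j / c j) :
    ¬ FKP.Optimal p c b xstar :=
  fkp_ratio_violation_not_optimal_general p c b hc xstar hfeas hij
end

section
/- In the reduction from Partition to IFKP, if the Partition instance a_1,...,a_n with Σ a_i = 2B has a subset S' with Σ_{a_i ∈ S'} a_i = B, then setting μ_i = a_i for a_i ∈ S', u_i = 4a_i for a_i ∉ S' (all other modifications zero) makes x* = (1,...,1,0) optimal for the modified fractional knapsack instance, and the total modification cost is exactly 7B. -/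
open Classical in
/-- Forward direction of the reduction from Partition to IFKP: a partition of the
`aᵢ` into two halves of sum `B` yields a modification of the constructed instance
of total cost exactly `7B` making `x* = (1,…,1,0)` optimal. -/
theorem ifkp_reduction_forward (n : ℕ) (a : Fin n → ℤ) (B : ℤ)
    (ha : ∀ i, 0 < a i) (hsum : ∑ i, a i = 2 * B)
    (S' : Finset (Fin n)) (hS' : ∑ i ∈ S', a i = B)
    -- modifications: μ_i = a_i on S', u_i = 4 a_i off S', item n+1 unchanged
    (u mu : Fin (n + 1) → ℤ)
    (hu : ∀ i : Fin (n + 1),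
      u i = if h : (i : ℕ) < n then (if ⟨i, h⟩ ∈ S' then 0 else 4 * a ⟨i, h⟩) else 0)
    (hmu : ∀ i : Fin (n + 1),
      mu i = if h : (i : ℕ) < n then (if ⟨i, h⟩ ∈ S' then a ⟨i, h⟩ else 0) else 0) :
    FKP.Optimal
      (fun i : Fin (n + 1) =>
        (((if h : (i : ℕ) < n then 4 * a ⟨i, h⟩ else 4) + u i : ℤ) : ℝ))
      (fun i : Fin (n + 1) =>
        (((if h : (i : ℕ) < n then 2 * a ⟨i, h⟩ else 1) - mu i : ℤ) : ℝ))
      ((3 * B : ℤ) : ℝ)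
      (fun i : Fin (n + 1) => if (i : ℕ) < n then 1 else 0)
    ∧ ∑ i, (1 * u i + 3 * mu i) = 7 * B := by
  set p : Fin (n+1) → ℝ := fun i =>
    (((if h : (i : ℕ) < n then 4 * a ⟨i, h⟩ else 4) + u i : ℤ) : ℝ) with hp
  set c : Fin (n+1) → ℝ := fun i =>
    (((if h : (i : ℕ) < n then 2 * a ⟨i, h⟩ else 1) - mu i : ℤ) : ℝ) with hc
  set x : Fin (n+1) → ℝ := fun i => if (i : ℕ) < n then 1 else 0 with hx
  have key : ∀ i, p i = 4 * c i := by
    intro i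
    simp only [hp, hc, hu i, hmu i]
    split_ifs with h h'
    · push_cast; ring
    · push_cast; ring
    · push_cast; ring
  have hcostx : ∑ i, c i * x i = ((3 * B : ℤ) : ℝ) := by
    have : ∑ i, c i * x i
        = ∑ i : Fin n, ((2 * a i - (if i ∈ S' then a i else 0) : ℤ) : ℝ) := by
      rw [Fin.sum_univ_castSucc]
      have hlast : x (Fin.last n) = 0 := by simp [hx]
      rw [hlast, mul_zero, add_zero]
      refine Finset.sum_congr rfl fun i _ => ?_
      have h1 : ((Fin.castSucc i : Fin (n+1)) : ℕ) < n := i.isLt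
      have hx1 : x (Fin.castSucc i) = 1 := by simp [hx, h1]
      rw [hx1, mul_one]
      simp [hc, hmu, h1]
    rw [this]
    push_cast
    rw [Finset.sum_sub_distrib]
    rw [Finset.sum_ite_mem, Finset.univ_inter]
    have h2 : (∑ i : Fin n, ((a i : ℝ))) = 2 * (B : ℝ) := by exact_mod_cast hsum
    have h3 : (∑ i ∈ S', ((a i : ℝ))) = (B : ℝ) := by exact_mod_cast hS'
    rw [← Finset.mul_sum, h2, h3]; ring
  have hfeas : FKP.Feasible c ((3 * B : ℤ) : ℝ) x := by
    constructor
    · intro i; simp only [hx]; split_ifs <;> norm_num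
    · rw [hcostx]
  refine ⟨⟨hfeas, ?_⟩, ?_⟩
  · intro y hy
    have hpy : ∑ i, p i * y i = 4 * ∑ i, c i * y i := by
      rw [Finset.mul_sum]
      refine Finset.sum_congr rfl fun i _ => ?_
      rw [key i]; ring
    have hpx : ∑ i, p i * x i = 4 * ((3*B : ℤ) : ℝ) := by
      rw [show ∑ i, p i * x i = ∑ i, 4 * (c i * x i) from
        Finset.sum_congr rfl fun i _ => by rw [key i]; ring]
      rw [← Finset.mul_sum, hcostx]
    rw [hpy, hpx]
    linarith [hy.2]
  · have : ∑ i : Fin (n+1), (1 * u i + 3 * mu i)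
        = ∑ i : Fin n, (if i ∈ S' then 3 * a i else 4 * a i) := by
      rw [Fin.sum_univ_castSucc]
      have : 1 * u (Fin.last n) + 3 * mu (Fin.last n) = 0 := by
        rw [hu, hmu]; simp
      rw [this, add_zero]
      refine Finset.sum_congr rfl fun i _ => ?_
      have h1 : ((Fin.castSucc i : Fin (n+1)) : ℕ) < n := i.isLt
      rw [hu, hmu]
      simp only [h1, dif_pos]
      have : (⟨((Fin.castSucc i : Fin (n+1)) : ℕ), h1⟩ : Fin n) = i := by
        ext; simp
      rw [this]
      split_ifs <;> ring
    rw [this]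
    have hsplit : ∑ i : Fin n, (if i ∈ S' then 3 * a i else 4 * a i)
        = ∑ i : Fin n, (4 * a i - if i ∈ S' then a i else 0) := by
      refine Finset.sum_congr rfl fun i _ => ?_
      split_ifs <;> ring
    rw [hsplit, Finset.sum_sub_distrib, Finset.sum_ite_mem, Finset.univ_inter,
      hS', ← Finset.mul_sum, hsum]
    ring
end

section
/- In the reduction from Partition to IFKP: if x, y ≥ 0 are modifications to a single item with profit 4a and cost 2a (profit increased by x, cost reduced by y ≤ a) satisfying (4a + x)/(2a − y) ≥ 4, then the modification cost x + 3y is at least 3a, with equality only when x + 4y = 4a; in particular the pure cost modification (x = 0, y = a) achieves cost exactly 3a, which is minimal. -/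
/-- Single-item analysis in the NP-hardness proof: for an item with profit `4a`
and cost `2a`, any modification `(x, y)` (profit increased by `x`, cost reduced by
`y ≤ a`) achieving ratio at least `4` has cost `x + 3y ≥ 3a`, with equality only
when `x + 4y = 4a`; the pure cost modification `(0, a)` achieves cost exactly `3a`. -/
theorem ifkp_single_item_cost (a : ℤ) (ha : 0 < a) (x y : ℝ)
    (hx : 0 ≤ x) (hy : 0 ≤ y) (hya : y ≤ (a : ℝ)) (hy2a : y < 2 * (a : ℝ))
    (hratio : (4 * (a : ℝ) + x) / (2 * (a : ℝ) - y) ≥ 4) :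
    x + 3 * y ≥ 3 * (a : ℝ) ∧
    (x + 3 * y = 3 * (a : ℝ) → x + 4 * y = 4 * (a : ℝ)) ∧
    (0 : ℝ) + 3 * (a : ℝ) = 3 * (a : ℝ) := by
  have hpos : (0 : ℝ) < 2 * (a : ℝ) - y := by linarith
  have key : 4 * (2 * (a : ℝ) - y) ≤ 4 * (a : ℝ) + x :=
    (le_div_iff₀ hpos).mp hratio
  refine ⟨by linarith, fun h => by linarith, by ring⟩
end

section
/- For the fixed-cost inverse fractional knapsack problem (only profits modifiable), there always exists an optimal modification in which profits p_i with x*_i = 1 are only (weakly) increased and profits p_i with x*_i = 0 are only (weakly) decreased; i.e., any optimal modification can be replaced by one of this form with no larger cost. -/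
/-- In FIFKP, any feasible modification can be replaced, at no larger cost, by one
which only increases profits on `I¹ = {i : x*_i = 1}` and only decreases profits on
`I⁰ = {i : x*_i = 0}`, still making `x*` optimal. -/
theorem fifkp_monotone_normal_form {n : ℕ} (p c : Fin n → ℤ) (b : ℤ)
    (hp : ∀ i, 0 < p i) (hc : ∀ i, 0 < c i)
    (xstar : Fin n → ℤ) (hx : ∀ i, xstar i = 0 ∨ xstar i = 1)
    (hbind : ∑ i, c i * xstar i = b)
    (w : Fin n → ℝ) (hw : ∀ i, 0 ≤ w i)
    (ubar vbar : Fin n → ℤ) (hub : ∀ i, 0 ≤ ubar i) (hvb : ∀ i, 0 ≤ vbar i)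
    (u v : Fin n → ℤ)
    (hu : ∀ i, 0 ≤ u i ∧ u i ≤ ubar i) (hv : ∀ i, 0 ≤ v i ∧ v i ≤ vbar i)
    (hopt : ∀ i j, xstar i = 1 → xstar j = 0 →
      ((p j + u j - v j : ℤ) : ℝ) / (c j : ℝ) ≤ ((p i + u i - v i : ℤ) : ℝ) / (c i : ℝ)) :
    ∃ u' v' : Fin n → ℤ,
      (∀ i, 0 ≤ u' i ∧ u' i ≤ ubar i) ∧ (∀ i, 0 ≤ v' i ∧ v' i ≤ vbar i) ∧
      (∀ i, xstar i = 1 → v' i = 0) ∧ (∀ i, xstar i = 0 → u' i = 0) ∧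
      (∀ i j, xstar i = 1 → xstar j = 0 →
        ((p j + u' j - v' j : ℤ) : ℝ) / (c j : ℝ) ≤ ((p i + u' i - v' i : ℤ) : ℝ) / (c i : ℝ)) ∧
      ∑ i, w i * ((u' i + v' i : ℤ) : ℝ) ≤ ∑ i, w i * ((u i + v i : ℤ) : ℝ) := by

  refine ⟨fun i => if xstar i = 1 then u i else 0,
          fun i => if xstar i = 0 then v i else 0, ?_, ?_, ?_, ?_, ?_, ?_⟩
  · intro i; by_cases h : xstar i = 1 <;> simp [h, (hu i).1, (hu i).2, hub i]
  · intro i; by_cases h : xstar i = 0 <;> simp [h, (hv i).1, (hv i).2, hvb i]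
  · intro i h; simp [h]
  · intro i h; simp [h]
  · intro i j hi hj
    have h0 : ¬ xstar j = 1 := by simp [hj]
    have h1 : ¬ xstar i = 0 := by simp [hi]
    simp only [hi, hj, if_pos rfl, if_neg h0, if_neg h1]
    have hcip : (0:ℝ) < (c i : ℝ) := by exact_mod_cast hc i
    have hcjp : (0:ℝ) < (c j : ℝ) := by exact_mod_cast hc j
    calc ((p j + 0 - v j : ℤ) : ℝ) / (c j : ℝ)
        ≤ ((p j + u j - v j : ℤ) : ℝ) / (c j : ℝ) := by
          gcongr
          push_cast; linarith [(hu j).1]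
      _ ≤ ((p i + u i - v i : ℤ) : ℝ) / (c i : ℝ) := hopt i j hi hj
      _ ≤ ((p i + u i - 0 : ℤ) : ℝ) / (c i : ℝ) := by
          gcongr
          push_cast; linarith [(hv i).1]
  · apply Finset.sum_le_sum
    intro i _
    apply mul_le_mul_of_nonneg_left _ (hw i)
    have h1 : (0:ℝ) ≤ (u i : ℝ) := by exact_mod_cast (hu i).1
    have h2 : (0:ℝ) ≤ (v i : ℝ) := by exact_mod_cast (hv i).1
    by_cases h : xstar i = 1
    · have h0 : ¬ xstar i = 0 := by simp [h]
      simp only [h, h0, if_pos rfl, if_neg h0]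
      push_cast; linarith
    · have h0 : xstar i = 0 := (hx i).resolve_right h
      simp only [h, h0, if_neg h, if_pos rfl]
      push_cast; linarith
end

section
/- For the inverse fractional knapsack problem under the l∞-norm, if the target vector x* satisfies Σ_{i : x*_i = 1} c_i = b (x* is feasible with binding budget), then the optimal objective value equals max over pairs (i,j) with i ∈ I¹, j ∈ I⁰ and p_i/c_i < p_j/c_j of K_{ij}, where K_{ij} is the minimum value K such that there exist integers u_i ∈ [0, min(ū_i, K)], v_j ∈ [0, min(v̄_j, K)], λ_j ∈ [0, min(λ̄_j, K)] satisfying (p_i + u_i)/c_i ≥ (p_j − v_j)/(c_j + λ_j). -/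
/-- `K` is achievable for the pair `(i, j)`: there are integer modifications
bounded by the individual bounds and by `K` making the ratio of item `i` dominate
that of item `j`. -/
def IFKPinf.AchPair {n : ℕ} (p c ubar vbar lbar : Fin n → ℤ)
    (i j : Fin n) (K : ℤ) : Prop :=
  ∃ u v lam : ℤ,
    0 ≤ u ∧ u ≤ min (ubar i) K ∧
    0 ≤ v ∧ v ≤ min (vbar j) K ∧
    0 ≤ lam ∧ lam ≤ min (lbar j) K ∧
    ((p j : ℝ) - (v : ℝ)) / ((c j : ℝ) + (lam : ℝ)) ≤ ((p i : ℝ) + (u : ℝ)) / (c i : ℝ)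

/-- `K` is achievable globally: there are modifications, bounded by the individual
bounds and with `l∞`-norm at most `K`, making `x*` (encoded by `I¹`, `I⁰`) optimal. -/
def IFKPinf.Ach {n : ℕ} (p c ubar vbar lbar : Fin n → ℤ)
    (I1 I0 : Finset (Fin n)) (K : ℤ) : Prop :=
  ∃ u v lam : Fin n → ℤ,
    (∀ i ∈ I1, 0 ≤ u i ∧ u i ≤ min (ubar i) K) ∧
    (∀ j ∈ I0, 0 ≤ v j ∧ v j ≤ min (vbar j) K) ∧
    (∀ j ∈ I0, 0 ≤ lam j ∧ lam j ≤ min (lbar j) K) ∧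
    ∀ i ∈ I1, ∀ j ∈ I0,
      ((p j : ℝ) - (v j : ℝ)) / ((c j : ℝ) + (lam j : ℝ)) ≤
        ((p i : ℝ) + (u i : ℝ)) / (c i : ℝ)

open Classical in
/-- For the `l∞`-norm inverse fractional knapsack problem with a binding budget,
the optimal objective value is the maximum of the pairwise optimal values `K_{ij}`
over the pairs `(i, j)`, `i ∈ I¹`, `j ∈ I⁰`, with `pᵢ/cᵢ < pⱼ/cⱼ`. -/
theorem ifkp_linf_opt_eq_max_pairwise {n : ℕ}
    (p c : Fin n → ℤ) (b : ℤ) (hp : ∀ i, 0 < p i) (hc : ∀ i, 0 < c i)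
    (ubar vbar lbar : Fin n → ℤ)
    (hub : ∀ i, 0 ≤ ubar i) (hvb : ∀ i, 0 ≤ vbar i) (hlb : ∀ i, 0 ≤ lbar i)
    (I1 I0 : Finset (Fin n)) (hdisj : Disjoint I1 I0) (hcover : I1 ∪ I0 = Finset.univ)
    (hbind : ∑ i ∈ I1, c i = b)
    (Kf : Fin n → Fin n → ℤ)
    (hKf : ∀ i ∈ I1, ∀ j ∈ I0, (p i : ℝ) / (c i : ℝ) < (p j : ℝ) / (c j : ℝ) →
      IsLeast {K : ℤ | 0 ≤ K ∧ IFKPinf.AchPair p c ubar vbar lbar i j K} (Kf i j))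
    (S : Finset (Fin n × Fin n))
    (hS : S = (I1 ×ˢ I0).filter
      (fun q => (p q.1 : ℝ) / (c q.1 : ℝ) < (p q.2 : ℝ) / (c q.2 : ℝ)))
    (hSne : S.Nonempty) :
    IsLeast {K : ℤ | 0 ≤ K ∧ IFKPinf.Ach p c ubar vbar lbar I1 I0 K}
      (S.sup' hSne (fun q => Kf q.1 q.2)) := by
  set M := S.sup' hSne (fun q => Kf q.1 q.2) with hMdef
  have hmemS : ∀ q ∈ S, q.1 ∈ I1 ∧ q.2 ∈ I0 ∧
      (p q.1 : ℝ) / (c q.1 : ℝ) < (p q.2 : ℝ) / (c q.2 : ℝ) := by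
    intro q hq
    rw [hS, Finset.mem_filter, Finset.mem_product] at hq
    exact ⟨hq.1.1, hq.1.2, hq.2⟩
  have hKfle : ∀ q ∈ S, 0 ≤ Kf q.1 q.2 ∧
      IFKPinf.AchPair p c ubar vbar lbar q.1 q.2 (Kf q.1 q.2) := by
    intro q hq
    obtain ⟨h1, h0, hr⟩ := hmemS q hq
    exact (hKf q.1 h1 q.2 h0 hr).1
  have hM0 : 0 ≤ M := by
    obtain ⟨q, hq⟩ := hSne
    exact le_trans (hKfle q hq).1 (Finset.le_sup' (fun q => Kf q.1 q.2) hq)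
  constructor
  · refine ⟨hM0, fun i => min (ubar i) M, fun j => min (vbar j) M,
      fun j => min (lbar j) M, ?_, ?_, ?_, ?_⟩
    · exact fun i _ => ⟨le_min (hub i) hM0, le_refl _⟩
    · exact fun j _ => ⟨le_min (hvb j) hM0, le_refl _⟩
    · exact fun j _ => ⟨le_min (hlb j) hM0, le_refl _⟩
    · intro i hi j hj
      have hci : (0 : ℝ) < (c i : ℝ) := by exact_mod_cast hc i
      have hcj : (0 : ℝ) < (c j : ℝ) := by exact_mod_cast hc j
      have hpi : (0 : ℝ) < (p i : ℝ) := by exact_mod_cast hp i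
      have hpj : (0 : ℝ) < (p j : ℝ) := by exact_mod_cast hp j
      have hU0 : (0 : ℝ) ≤ ((min (ubar i) M : ℤ) : ℝ) := by
        exact_mod_cast le_min (hub i) hM0
      have hV0 : (0 : ℝ) ≤ ((min (vbar j) M : ℤ) : ℝ) := by
        exact_mod_cast le_min (hvb j) hM0
      have hL0 : (0 : ℝ) ≤ ((min (lbar j) M : ℤ) : ℝ) := by
        exact_mod_cast le_min (hlb j) hM0
      by_cases hr : (p i : ℝ) / (c i : ℝ) < (p j : ℝ) / (c j : ℝ)
      · -- the pair is in S, use the pairwise witness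
        have hqS : (i, j) ∈ S := by
          rw [hS, Finset.mem_filter, Finset.mem_product]
          exact ⟨⟨hi, hj⟩, hr⟩
        obtain ⟨hK0, u0, v0, lam0, hu0, hu0', hv0, hv0', hl0, hl0', hineq⟩ :=
          hKfle (i, j) hqS
        have hKM : Kf i j ≤ M := Finset.le_sup' (fun q => Kf q.1 q.2) hqS
        have hv0V : ((v0 : ℝ)) ≤ ((min (vbar j) M : ℤ) : ℝ) := by
          exact_mod_cast le_min (le_trans hv0' (min_le_left _ _))
            (le_trans hv0' (le_trans (min_le_right _ _) hKM))
        have hl0L : ((lam0 : ℝ)) ≤ ((min (lbar j) M : ℤ) : ℝ) := by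
          exact_mod_cast le_min (le_trans hl0' (min_le_left _ _))
            (le_trans hl0' (le_trans (min_le_right _ _) hKM))
        have hu0U : ((u0 : ℝ)) ≤ ((min (ubar i) M : ℤ) : ℝ) := by
          exact_mod_cast le_min (le_trans hu0' (min_le_left _ _))
            (le_trans hu0' (le_trans (min_le_right _ _) hKM))
        have hl0R : (0 : ℝ) ≤ (lam0 : ℝ) := by exact_mod_cast hl0
        have hdenL : (0 : ℝ) < (c j : ℝ) + ((min (lbar j) M : ℤ) : ℝ) := by linarith
        have hden0 : (0 : ℝ) < (c j : ℝ) + (lam0 : ℝ) := by linarith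
        by_cases hnum : (p j : ℝ) - ((min (vbar j) M : ℤ) : ℝ) < 0
        · have hrhs : (0 : ℝ) ≤ ((p i : ℝ) + ((min (ubar i) M : ℤ) : ℝ)) / (c i : ℝ) := by
            apply div_nonneg _ (le_of_lt hci); linarith
          have : ((p j : ℝ) - ((min (vbar j) M : ℤ) : ℝ)) /
              ((c j : ℝ) + ((min (lbar j) M : ℤ) : ℝ)) < 0 :=
            div_neg_of_neg_of_pos hnum hdenL
          linarith
        · push_neg at hnum
          have step1 : ((p j : ℝ) - ((min (vbar j) M : ℤ) : ℝ)) /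
              ((c j : ℝ) + ((min (lbar j) M : ℤ) : ℝ)) ≤
              ((p j : ℝ) - (v0 : ℝ)) / ((c j : ℝ) + (lam0 : ℝ)) := by
            apply div_le_div₀ (by linarith) (by linarith) hden0 (by linarith)
          have step3 : ((p i : ℝ) + (u0 : ℝ)) / (c i : ℝ) ≤
              ((p i : ℝ) + ((min (ubar i) M : ℤ) : ℝ)) / (c i : ℝ) := by
            gcongr
            all_goals first | exact le_of_lt hci | linarith
          linarith [step1, hineq, step3]
      · -- ratio of i already dominates: crude bounds suffice
        push_neg at hr
        have hdenL : (0 : ℝ) < (c j : ℝ) + ((min (lbar j) M : ℤ) : ℝ) := by linarith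
        have step1 : ((p j : ℝ) - ((min (vbar j) M : ℤ) : ℝ)) /
            ((c j : ℝ) + ((min (lbar j) M : ℤ) : ℝ)) ≤ (p j : ℝ) / (c j : ℝ) := by
          rcases le_or_gt 0 ((p j : ℝ) - ((min (vbar j) M : ℤ) : ℝ)) with h | h
          · exact div_le_div₀ (le_of_lt hpj) (by linarith) hcj (by linarith)
          · have : ((p j : ℝ) - ((min (vbar j) M : ℤ) : ℝ)) /
                ((c j : ℝ) + ((min (lbar j) M : ℤ) : ℝ)) < 0 :=
              div_neg_of_neg_of_pos h hdenL
            have : (0:ℝ) ≤ (p j : ℝ) / (c j : ℝ) := div_nonneg (le_of_lt hpj) (le_of_lt hcj)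
            linarith
        have step2 : (p i : ℝ) / (c i : ℝ) ≤
            ((p i : ℝ) + ((min (ubar i) M : ℤ) : ℝ)) / (c i : ℝ) := by
          gcongr
          all_goals first | exact le_of_lt hci | linarith
        linarith
  · rintro K ⟨hK0, u, v, lam, hu, hv, hl, hineq⟩
    apply Finset.sup'_le
    intro q hq
    obtain ⟨h1, h0, hr⟩ := hmemS q hq
    exact (hKf q.1 h1 q.2 h0 hr).2 ⟨hK0,
      u q.1, v q.2, lam q.2,
      (hu q.1 h1).1, (hu q.1 h1).2,
      (hv q.2 h0).1, (hv q.2 h0).2,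
      (hl q.2 h0).1, (hl q.2 h0).2,
      hineq q.1 h1 q.2 h0⟩
end

section
/- Let c_i and bounds μ̄_i ≥ 0 (integers) for i in a finite set I, and let b > Σ_{i∈I} c_i be such that Σ_{i∈I}(c_i + μ̄_i) ≥ b. Order the elements and define J² = {i : μ̄_i < μ̄_{i*}} and J¹ = {i : μ̄_i ≥ μ̄_{i*}} for an appropriate threshold μ̄_{i*}, and set μ_min = ⌈(b − Σ_{i∈I} c_i − Σ_{j∈J²} μ̄_j)/|J¹|⌉. Then Σ_{j∈J²}(c_j + μ̄_j) + Σ_{j∈J¹}(c_j + μ_min) ≥ b, and moreover assigning value μ_min to N = b − Σ_{j∈J²}(c_j+μ̄_j) − Σ_{j∈J¹}(c_j + μ_min − 1) of the variables in J¹ and μ_min − 1 to the remaining |J¹| − N achieves Σ_{i∈I}(c_i + μ_i) = b exactly, with max_i μ_i = μ_min minimal among all integer assignments 0 ≤ μ_i ≤ μ̄_i with Σ (c_i + μ_i) = b. -/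
open Classical in
/-- Water-filling step of Case 2 of the `l∞`-norm algorithm: saturating the items
with small capacity and spreading the residual demand over the remaining items
gives an exact integer assignment summing to `b` whose maximum increase `μ_min`
is minimal. -/
theorem waterfilling_detailed {ι : Type*} [DecidableEq ι] (I : Finset ι)
    (c mubar : ι → ℤ) (hmubar : ∀ i ∈ I, 0 ≤ mubar i) (b : ℤ)
    (hb1 : ∑ i ∈ I, c i < b) (hb2 : b ≤ ∑ i ∈ I, (c i + mubar i))
    (istar : ι) (histar : istar ∈ I)
    (J1 J2 : Finset ι)
    (hJ2 : J2 = I.filter (fun i => mubar i < mubar istar))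
    (hJ1 : J1 = I.filter (fun i => mubar istar ≤ mubar i))
    (hJ1ne : J1.Nonempty)
    -- `μ̄_{i*}` is an appropriate threshold: the residual demand spread over the
    -- items with capacity `≥ μ̄_{i*}` does not exceed `μ̄_{i*}`, minimally so.
    (hthr : ((b - ∑ i ∈ I, c i - ∑ j ∈ J2, mubar j : ℤ) : ℚ) / (J1.card : ℚ)
              ≤ (mubar istar : ℚ))
    (hthrmin : ∀ i ∈ I,
      (((b - ∑ i' ∈ I, c i' - ∑ j ∈ I.filter (fun j => mubar j < mubar i), mubar j : ℤ) : ℚ)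
          / ((I.filter (fun j => mubar i ≤ mubar j)).card : ℚ) ≤ (mubar i : ℚ)) →
        mubar istar ≤ mubar i)
    (mumin : ℤ)
    (hmumin : mumin =
      ⌈((b - ∑ i ∈ I, c i - ∑ j ∈ J2, mubar j : ℤ) : ℚ) / (J1.card : ℚ)⌉)
    (N : ℤ)
    (hN : N = b - ∑ j ∈ J2, (c j + mubar j) - ∑ j ∈ J1, (c j + mumin - 1)) :
    (∑ j ∈ J2, (c j + mubar j) + ∑ j ∈ J1, (c j + mumin) ≥ b) ∧
    (0 ≤ N ∧ N ≤ (J1.card : ℤ)) ∧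
    ∃ (mu : ι → ℤ) (T : Finset ι),
      T ⊆ J1 ∧ (T.card : ℤ) = N ∧
      (∀ i ∈ J2, mu i = mubar i) ∧
      (∀ i ∈ T, mu i = mumin) ∧
      (∀ i ∈ J1 \ T, mu i = mumin - 1) ∧
      (∀ i ∈ I, 0 ≤ mu i ∧ mu i ≤ mubar i) ∧
      (∑ i ∈ I, (c i + mu i) = b) ∧
      (∀ i ∈ I, mu i ≤ mumin) ∧
      (∀ mu' : ι → ℤ, (∀ i ∈ I, 0 ≤ mu' i ∧ mu' i ≤ mubar i) →
        ∑ i ∈ I, (c i + mu' i) = b → ∃ i ∈ I, mumin ≤ mu' i) := by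
  classical
  have hJ1I : J1 ⊆ I := by rw [hJ1]; exact Finset.filter_subset _ _
  have hJ2I : J2 ⊆ I := by rw [hJ2]; exact Finset.filter_subset _ _
  have hJ1mem : ∀ i, i ∈ J1 ↔ i ∈ I ∧ mubar istar ≤ mubar i := by
    intro i; rw [hJ1]; simp [Finset.mem_filter]
  have hJ2mem : ∀ i, i ∈ J2 ↔ i ∈ I ∧ mubar i < mubar istar := by
    intro i; rw [hJ2]; simp [Finset.mem_filter]
  have hsplit : ∀ f : ι → ℤ, ∑ i ∈ I, f i = ∑ i ∈ J2, f i + ∑ i ∈ J1, f i := by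
    intro f
    rw [hJ2, hJ1, ← Finset.sum_filter_add_sum_filter_not I (fun i => mubar i < mubar istar) f]
    congr 2
    exact Finset.filter_congr (fun i _ => by simp [not_lt])
  have hn : 0 < (J1.card : ℤ) := by exact_mod_cast Finset.card_pos.mpr hJ1ne
  have hnQ : (0 : ℚ) < (J1.card : ℚ) := by exact_mod_cast Finset.card_pos.mpr hJ1ne
  -- key lemma: a maximal element of J2 whose value times |J1| dominates the residual
  -- would satisfy the threshold condition, contradicting minimality of istar
  have hkey : ∀ i'' ∈ J2, (∀ j ∈ J2, mubar j ≤ mubar i'') →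
      b - ∑ i ∈ I, c i - ∑ j ∈ J2, mubar j ≤ mubar i'' * J1.card → False := by
    intro i'' hi''J2 hmax hRv
    have hi''I : i'' ∈ I := hJ2I hi''J2
    have hvlt : mubar i'' < mubar istar := ((hJ2mem i'').mp hi''J2).2
    have hv0 : 0 ≤ mubar i'' := hmubar i'' hi''I
    set K := J2.filter (fun j => mubar j = mubar i'') with hK
    have hKJ2 : K ⊆ J2 := Finset.filter_subset _ _
    have hAeq : I.filter (fun j => mubar j < mubar i'') = J2 \ K := by
      ext j
      simp only [Finset.mem_filter, Finset.mem_sdiff, hK, hJ2mem]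
      constructor
      · rintro ⟨hjI, hjv⟩
        refine ⟨⟨hjI, lt_trans hjv hvlt⟩, ?_⟩
        rintro ⟨-, h⟩; omega
      · rintro ⟨⟨hjI, hjlt⟩, hnk⟩
        have hle : mubar j ≤ mubar i'' := hmax j ((hJ2mem j).mpr ⟨hjI, hjlt⟩)
        refine ⟨hjI, ?_⟩
        rcases lt_or_eq_of_le hle with h | h
        · exact h
        · exact absurd ⟨⟨hjI, hjlt⟩, h⟩ hnk
    have hdisjK : Disjoint J1 K := by
      rw [Finset.disjoint_left]
      intro a ha haK
      have h1 := ((hJ1mem a).mp ha).2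
      have h2 := ((hJ2mem a).mp (hKJ2 haK)).2
      omega
    have hBeq : I.filter (fun j => mubar i'' ≤ mubar j) = J1 ∪ K := by
      ext j
      simp only [Finset.mem_filter, Finset.mem_union, hK, hJ1mem, hJ2mem]
      constructor
      · rintro ⟨hjI, hjv⟩
        by_cases h : mubar istar ≤ mubar j
        · exact Or.inl ⟨hjI, h⟩
        · push_neg at h
          have := hmax j ((hJ2mem j).mpr ⟨hjI, h⟩)
          exact Or.inr ⟨⟨hjI, h⟩, by omega⟩
      · rintro (⟨hjI, h⟩ | ⟨⟨hjI, h⟩, he⟩)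
        · exact ⟨hjI, by omega⟩
        · exact ⟨hjI, by omega⟩
    have hKsum : ∑ j ∈ K, mubar j = (K.card : ℤ) * mubar i'' := by
      rw [Finset.sum_congr rfl (fun j hj => (Finset.mem_filter.mp hj).2),
        Finset.sum_const, nsmul_eq_mul]
    have hcard : (I.filter (fun j => mubar i'' ≤ mubar j)).card = J1.card + K.card := by
      rw [hBeq, Finset.card_union_of_disjoint hdisjK]
    have hsumA : ∑ j ∈ I.filter (fun j => mubar j < mubar i''), mubar j
        = ∑ j ∈ J2, mubar j - (K.card : ℤ) * mubar i'' := by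
      rw [hAeq, Finset.sum_sdiff_eq_sub hKJ2, hKsum]
    have hcond : ((b - ∑ i' ∈ I, c i' - ∑ j ∈ I.filter (fun j => mubar j < mubar i''),
          mubar j : ℤ) : ℚ) / ((I.filter (fun j => mubar i'' ≤ mubar j)).card : ℚ)
          ≤ (mubar i'' : ℚ) := by
      rw [hsumA, hcard]
      rw [div_le_iff₀ (by positivity)]
      have hRv' : ((b - ∑ i ∈ I, c i - ∑ j ∈ J2, mubar j : ℤ) : ℚ)
          ≤ (mubar i'' : ℚ) * (J1.card : ℚ) := by exact_mod_cast hRv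
      have hk0 : (0 : ℚ) ≤ (K.card : ℚ) := by positivity
      push_cast
      push_cast at hRv'
      nlinarith [hRv', hk0]
    have := hthrmin i'' hi''I hcond
    omega
  -- the residual is positive
  have hRpos : 0 < b - ∑ i ∈ I, c i - ∑ j ∈ J2, mubar j := by
    by_contra h
    push_neg at h
    rcases J2.eq_empty_or_nonempty with he | hne
    · rw [he] at h; simp at h; omega
    · obtain ⟨i'', hi'', hmax⟩ := J2.exists_max_image mubar hne
      have h0 : 0 ≤ mubar i'' := hmubar i'' (hJ2I hi'')
      exact hkey i'' hi'' hmax (by nlinarith)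
  -- ceiling facts
  have hceil1 : b - ∑ i ∈ I, c i - ∑ j ∈ J2, mubar j ≤ mumin * J1.card := by
    have h1 : ((b - ∑ i ∈ I, c i - ∑ j ∈ J2, mubar j : ℤ) : ℚ) / (J1.card : ℚ)
        ≤ (mumin : ℚ) := by rw [hmumin]; exact_mod_cast Int.le_ceil _
    rw [div_le_iff₀ hnQ] at h1
    exact_mod_cast h1
  have hceil2 : (mumin - 1) * J1.card < b - ∑ i ∈ I, c i - ∑ j ∈ J2, mubar j := by
    have h1 : ((mumin - 1 : ℤ) : ℚ)
        < ((b - ∑ i ∈ I, c i - ∑ j ∈ J2, mubar j : ℤ) : ℚ) / (J1.card : ℚ) := by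
      rw [← Int.lt_ceil, ← hmumin]; omega
    rw [lt_div_iff₀ hnQ] at h1
    exact_mod_cast h1
  have hmle : mumin ≤ mubar istar := by
    rw [hmumin]; exact Int.ceil_le.mpr hthr
  have hm1 : 1 ≤ mumin := by nlinarith [hceil1, hRpos, hn]
  have hmuleJ1 : ∀ i ∈ J1, mumin ≤ mubar i := fun i hi =>
    le_trans hmle ((hJ1mem i).mp hi).2
  have hJ2mu : ∀ j ∈ J2, mubar j ≤ mumin - 1 := by
    intro j hj
    obtain ⟨i'', hi'', hmax⟩ := J2.exists_max_image mubar ⟨j, hj⟩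
    have hv : mubar i'' ≤ mumin - 1 := by
      by_contra h
      push_neg at h
      exact hkey i'' hi'' hmax (by nlinarith)
    exact le_trans (hmax j hj) hv
  -- sum expansions
  have hsum2 : ∑ j ∈ J2, (c j + mubar j) = ∑ j ∈ J2, c j + ∑ j ∈ J2, mubar j :=
    Finset.sum_add_distrib
  have hsum1 : ∑ j ∈ J1, (c j + mumin - 1) = ∑ j ∈ J1, c j + (J1.card : ℤ) * (mumin - 1) := by
    have : ∀ j ∈ J1, c j + mumin - 1 = c j + (mumin - 1) := fun j _ => by ring
    rw [Finset.sum_congr rfl this, Finset.sum_add_distrib, Finset.sum_const, nsmul_eq_mul]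
  have hsum1' : ∑ j ∈ J1, (c j + mumin) = ∑ j ∈ J1, c j + (J1.card : ℤ) * mumin := by
    rw [Finset.sum_add_distrib, Finset.sum_const, nsmul_eq_mul]
  have hcsplit := hsplit c
  have hNval : N = (b - ∑ i ∈ I, c i - ∑ j ∈ J2, mubar j) - (J1.card : ℤ) * (mumin - 1) := by
    rw [hN, hsum2, hsum1]; linarith
  have hN0 : 0 ≤ N := by nlinarith [hceil2, hNval]
  have hNcard : N ≤ (J1.card : ℤ) := by nlinarith [hceil1, hNval]
  refine ⟨by rw [hsum2, hsum1']; linarith, ⟨hN0, hNcard⟩, ?_⟩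
  -- construct the assignment
  obtain ⟨T, hTsub, hTcard⟩ := Finset.exists_subset_card_eq
    (s := J1) (n := N.toNat) (by rw [← Int.toNat_of_nonneg hN0] at hNcard; exact_mod_cast hNcard)
  have hTcard' : (T.card : ℤ) = N := by rw [hTcard]; exact Int.toNat_of_nonneg hN0
  set mu : ι → ℤ := fun i => if i ∈ T then mumin else if i ∈ J1 then mumin - 1 else mubar i
    with hmu
  have hdisjJ : ∀ i, i ∈ J2 → i ∉ J1 := by
    intro i h2 h1
    have := ((hJ1mem i).mp h1).2
    have := ((hJ2mem i).mp h2).2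
    omega
  have hmuJ2 : ∀ i ∈ J2, mu i = mubar i := by
    intro i hi
    have h1 : i ∉ J1 := hdisjJ i hi
    have hT : i ∉ T := fun hT => h1 (hTsub hT)
    simp [hmu, hT, h1]
  have hmuT : ∀ i ∈ T, mu i = mumin := by intro i hi; simp [hmu, hi]
  have hmuS : ∀ i ∈ J1 \ T, mu i = mumin - 1 := by
    intro i hi
    rw [Finset.mem_sdiff] at hi
    simp [hmu, hi.1, hi.2]
  have hIcases : ∀ i ∈ I, i ∈ J1 ∨ i ∈ J2 := by
    intro i hi
    by_cases h : mubar istar ≤ mubar i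
    · exact Or.inl ((hJ1mem i).mpr ⟨hi, h⟩)
    · exact Or.inr ((hJ2mem i).mpr ⟨hi, by omega⟩)
  have hbounds : ∀ i ∈ I, 0 ≤ mu i ∧ mu i ≤ mubar i := by
    intro i hi
    rcases hIcases i hi with h1 | h2
    · have hub := hmuleJ1 i h1
      by_cases hT : i ∈ T
      · rw [hmuT i hT]; omega
      · rw [hmuS i (Finset.mem_sdiff.mpr ⟨h1, hT⟩)]; omega
    · rw [hmuJ2 i h2]
      exact ⟨hmubar i hi, le_refl _⟩
  have hmax : ∀ i ∈ I, mu i ≤ mumin := by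
    intro i hi
    rcases hIcases i hi with h1 | h2
    · by_cases hT : i ∈ T
      · rw [hmuT i hT]
      · rw [hmuS i (Finset.mem_sdiff.mpr ⟨h1, hT⟩)]; omega
    · rw [hmuJ2 i h2]
      have := hJ2mu i h2
      omega
  have hsdcard : ((J1 \ T).card : ℤ) = (J1.card : ℤ) - N := by
    rw [Finset.card_sdiff_of_subset hTsub]
    have : T.card ≤ J1.card := Finset.card_le_card hTsub
    push_cast [Nat.cast_sub this]
    omega
  have hsumeq : ∑ i ∈ I, (c i + mu i) = b := by
    rw [hsplit (fun i => c i + mu i)]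
    have e2 : ∑ i ∈ J2, (c i + mu i) = ∑ j ∈ J2, c j + ∑ j ∈ J2, mubar j := by
      rw [Finset.sum_congr rfl (fun i hi => by rw [hmuJ2 i hi])]
      exact Finset.sum_add_distrib
    have eT : ∑ i ∈ T, (c i + mu i) = ∑ i ∈ T, c i + (T.card : ℤ) * mumin := by
      rw [Finset.sum_congr rfl (fun i hi => by rw [hmuT i hi]),
        Finset.sum_add_distrib, Finset.sum_const, nsmul_eq_mul]
    have eS : ∑ i ∈ J1 \ T, (c i + mu i)
        = ∑ i ∈ J1 \ T, c i + ((J1 \ T).card : ℤ) * (mumin - 1) := by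
      rw [Finset.sum_congr rfl (fun i hi => by rw [hmuS i hi]),
        Finset.sum_add_distrib, Finset.sum_const, nsmul_eq_mul]
    have e1 : ∑ i ∈ J1, (c i + mu i)
        = ∑ i ∈ (J1 \ T), (c i + mu i) + ∑ i ∈ T, (c i + mu i) :=
      (Finset.sum_sdiff hTsub).symm
    have ec : ∑ i ∈ (J1 \ T), c i + ∑ i ∈ T, c i = ∑ i ∈ J1, c i :=
      Finset.sum_sdiff hTsub
    rw [e2, e1, eT, eS, hsdcard, hTcard']
    linarith [hNval, hcsplit, ec]
  refine ⟨mu, T, hTsub, hTcard', hmuJ2, hmuT, hmuS, hbounds, hsumeq, hmax, ?_⟩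
  intro mu' hf hs
  by_contra hcon
  push_neg at hcon
  have h1 : ∑ i ∈ J1, mu' i ≤ (J1.card : ℤ) * (mumin - 1) := by
    calc ∑ i ∈ J1, mu' i ≤ ∑ i ∈ J1, (mumin - 1) :=
          Finset.sum_le_sum (fun i hi => by have := hcon i (hJ1I hi); omega)
      _ = (J1.card : ℤ) * (mumin - 1) := by rw [Finset.sum_const, nsmul_eq_mul]
  have h2 : ∑ i ∈ J2, mu' i ≤ ∑ i ∈ J2, mubar i :=
    Finset.sum_le_sum (fun i hi => (hf i (hJ2I hi)).2)
  have h3 : ∑ i ∈ I, (c i + mu' i) = ∑ i ∈ I, c i + (∑ i ∈ J2, mu' i + ∑ i ∈ J1, mu' i) := by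
    rw [Finset.sum_add_distrib, hsplit mu']
  rw [h3] at hs
  linarith [hceil2]
end

section
/- Minimax water-filling lemma: given integers c_i and capacities μ̄_i ≥ 0 for i = 1,...,m and a target b with Σ c_i ≤ b ≤ Σ (c_i + μ̄_i), the minimum possible value of max_i μ_i over integer vectors with 0 ≤ μ_i ≤ μ̄_i and Σ (c_i + μ_i) = b equals the smallest integer K such that Σ_i min(μ̄_i, K) ≥ b − Σ_i c_i. -/
/-- Filling lemma: any `0 ≤ D ≤ ∑ a` can be distributed within capacities `a`. -/
lemma waterfill_exists {ι : Type*} [DecidableEq ι] (s : Finset ι) :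
    ∀ (a : ι → ℤ), (∀ i ∈ s, 0 ≤ a i) → ∀ D : ℤ, 0 ≤ D → D ≤ ∑ i ∈ s, a i →
      ∃ μ : ι → ℤ, (∀ i ∈ s, 0 ≤ μ i ∧ μ i ≤ a i) ∧ ∑ i ∈ s, μ i = D := by
  induction s using Finset.cons_induction with
  | empty =>
    intro a _ D hD0 hD
    refine ⟨fun _ => 0, by simp, ?_⟩
    simp only [Finset.sum_empty] at hD ⊢
    omega
  | cons j s hj ih =>
    intro a ha D hD0 hD
    rw [Finset.sum_cons] at hD
    set x := min (a j) D with hx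
    have haj : 0 ≤ a j := ha j (Finset.mem_cons_self _ _)
    have hx0 : 0 ≤ x := le_min haj hD0
    have hxa : x ≤ a j := min_le_left _ _
    have hxD : x ≤ D := min_le_right _ _
    have hsum0 : 0 ≤ ∑ i ∈ s, a i :=
      Finset.sum_nonneg fun i hi => ha i (Finset.mem_cons_of_mem hi)
    have hD' : D - x ≤ ∑ i ∈ s, a i := by
      rcases min_cases (a j) D with ⟨h1, _⟩ | ⟨h1, _⟩ <;> omega
    obtain ⟨μ', hμ', hsum'⟩ := ih a (fun i hi => ha i (Finset.mem_cons_of_mem hi))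
      (D - x) (by omega) hD'
    refine ⟨Function.update μ' j x, ?_, ?_⟩
    · intro i hi
      rcases Finset.mem_cons.mp hi with rfl | hi
      · simp [hx0, hxa]
      · have hij : i ≠ j := fun h => hj (h ▸ hi)
        simpa [Function.update_of_ne hij] using hμ' i hi
    · rw [Finset.sum_cons, Function.update_self]
      have : ∑ i ∈ s, Function.update μ' j x i = ∑ i ∈ s, μ' i :=
        Finset.sum_congr rfl fun i hi =>
          Function.update_of_ne (fun h : i = j => hj (h ▸ hi)) _ _
      omega

/-- Minimax water-filling lemma: the minimum over integer vectors
`0 ≤ μ ≤ μ̄` with `∑ (cᵢ + μᵢ) = b` of `max_i μᵢ` equals the smallest integer `K`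
with `∑ min(μ̄ᵢ, K) ≥ b − ∑ cᵢ`. -/
theorem waterfilling_minimax {m : ℕ} (hm : 0 < m)
    (hne : (Finset.univ : Finset (Fin m)).Nonempty)
    (c mubar : Fin m → ℤ) (hmubar : ∀ i, 0 ≤ mubar i) (b : ℤ)
    (hb1 : ∑ i, c i ≤ b) (hb2 : b ≤ ∑ i, (c i + mubar i))
    (K : ℤ)
    (hK : IsLeast {K' : ℤ | 0 ≤ K' ∧ b - ∑ i, c i ≤ ∑ i, min (mubar i) K'} K) :
    IsLeast {M : ℤ | ∃ mu : Fin m → ℤ,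
        (∀ i, 0 ≤ mu i ∧ mu i ≤ mubar i) ∧
        ∑ i, (c i + mu i) = b ∧
        M = Finset.univ.sup' hne mu} K := by
  obtain ⟨⟨hK0, hKsum⟩, hKmin⟩ := hK
  set D := b - ∑ i, c i with hD
  have hD0 : 0 ≤ D := by omega
  constructor
  · -- K is achieved
    obtain ⟨μ, hμ, hsum⟩ := waterfill_exists Finset.univ (fun i => min (mubar i) K)
      (fun i _ => le_min (hmubar i) hK0) D hD0 hKsum
    have hμ' : ∀ i, 0 ≤ μ i ∧ μ i ≤ mubar i := fun i =>
      ⟨(hμ i (Finset.mem_univ i)).1,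
        (hμ i (Finset.mem_univ i)).2.trans (min_le_left _ _)⟩
    refine ⟨μ, hμ', by rw [Finset.sum_add_distrib, hsum]; omega, ?_⟩
    have hle : Finset.univ.sup' hne μ ≤ K :=
      Finset.sup'_le _ _ fun i _ => (hμ i (Finset.mem_univ i)).2.trans (min_le_right _ _)
    have hge : K ≤ Finset.univ.sup' hne μ := by
      rcases eq_or_lt_of_le hK0 with h0 | hpos
      · obtain ⟨i, _⟩ := hne
        exact h0 ▸ le_trans (hμ' i).1 (Finset.le_sup' μ (Finset.mem_univ i))
      · -- K - 1 is not in the set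
        have hnot : ¬ (0 ≤ K - 1 ∧ D ≤ ∑ i, min (mubar i) (K - 1)) := by
          intro h
          have := hKmin h
          omega
        have hlt : ∑ i, min (mubar i) (K - 1) < D := by
          by_contra h
          exact hnot ⟨by omega, by omega⟩
        rw [← hsum] at hlt
        obtain ⟨i, _, hi⟩ := Finset.exists_lt_of_sum_lt hlt
        have h1 : μ i ≤ mubar i := (hμ' i).2
        have h2 : K ≤ μ i := by
          rcases min_cases (mubar i) (K - 1) with ⟨he, _⟩ | ⟨he, _⟩ <;> omega
        exact h2.trans (Finset.le_sup' μ (Finset.mem_univ i))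
    exact le_antisymm hge hle
  · -- lower bound
    rintro M ⟨μ, hμ, hsum, rfl⟩
    apply hKmin
    constructor
    · obtain ⟨i, _⟩ := hne
      exact le_trans (hμ i).1 (Finset.le_sup' μ (Finset.mem_univ i))
    · have hsμ : ∑ i, μ i = D := by
        rw [Finset.sum_add_distrib] at hsum; omega
      rw [← hsμ]
      exact Finset.sum_le_sum fun i _ =>
        le_min (hμ i).2 (Finset.le_sup' μ (Finset.mem_univ i))
end
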